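/- arXiv:2511.07214 — 6 statements merged into one kernel-verified Lean document; each statement's English description precedes it below -/
import Mathlib

section
/- Let s ∈ (3/2,2), 0 < ε < s − 1, and let γ : ℝ → ℝⁿ be a 1-periodic C¹ curve parametrized by arclength, injective on [0,1), and bi-Lipschitz with constant C ≥ 1. Let h, k : ℝ → ℝⁿ be 1-periodic C¹ maps. Then | ∫₀¹ ∫_{−1/2}^{1/2} ⟨Ω^{s+ε}_γ γ(x,w), Ω^{s−ε}_γ k(x,w)⟩ · ⟨Δ_w γ(x), Δ_w h(x)⟩ / |Δ_w γ(x)|² dμ_γ | ≤ C ‖h'‖_∞ · ( ∫₀¹∫_{−1/2}^{1/2} |Ω^{s+ε}_γ γ|² dμ_γ )^{1/2} · ( ∫₀¹∫_{−1/2}^{1/2} |Ω^{s−ε}_γ k|² dμ_γ )^{1/2} (an inequality in [0,∞]). -/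
open MeasureTheory
open scoped RealInnerProductSpace ENNReal

noncomputable section

/-- Differentiation with respect to arclength: `D_γ h = h'/|γ'|`
(expressed via the given derivative functions). -/
def Dg {n : ℕ} (γ' h' : ℝ → EuclideanSpace ℝ (Fin n)) (x : ℝ) :
    EuclideanSpace ℝ (Fin n) :=
  ‖γ' x‖⁻¹ • h' x

/-- `L_γ h(x,w) = Δ_w h(x) − D_γ h(x) ⟨D_γ γ(x), Δ_w γ(x)⟩`. -/
def Lg {n : ℕ} (γ γ' h h' : ℝ → EuclideanSpace ℝ (Fin n)) (x w : ℝ) :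
    EuclideanSpace ℝ (Fin n) :=
  (h (x + w) - h x) - ⟪Dg γ' γ' x, γ (x + w) - γ x⟫ • Dg γ' h' x

/-- `Ω^σ_γ h(x,w) = L_γ h(x,w)/|Δ_w γ(x)|^σ`. -/
def Om {n : ℕ} (σ : ℝ) (γ γ' h h' : ℝ → EuclideanSpace ℝ (Fin n)) (x w : ℝ) :
    EuclideanSpace ℝ (Fin n) :=
  (‖γ (x + w) - γ x‖ ^ σ)⁻¹ • Lg γ γ' h h' x w

/-- The density of the measure `dμ_γ = |γ'(x)||γ'(x+w)|/|Δ_w γ(x)| dw dx`. -/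
def dens {n : ℕ} (γ γ' : ℝ → EuclideanSpace ℝ (Fin n)) (x w : ℝ) : ℝ :=
  ‖γ' x‖ * ‖γ' (x + w)‖ / ‖γ (x + w) - γ x‖

/-- The tangent-point energy `TP(γ) = ∬ |Ω^s_γ γ|² dμ_γ`, as an element of `[0,∞]`. -/
def TPe {n : ℕ} (s : ℝ) (γ γ' : ℝ → EuclideanSpace ℝ (Fin n)) : ℝ≥0∞ :=
  ∫⁻ x in Set.Icc (0:ℝ) 1, ∫⁻ w in Set.Ioo (-(1:ℝ)/2) (1/2),
    ENNReal.ofReal (‖Om s γ γ' γ γ' x w‖ ^ 2 * dens γ γ' x w)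

end

/-!
Pointwise, the factor `⟨Δ_w γ, Δ_w h⟩ / |Δ_w γ|²` is at most `|Δ_w h| / |Δ_w γ|`, and by the mean
value inequality and the bi-Lipschitz bound `|Δ_w h| ≤ ‖h'‖_∞ |w| ≤ C ‖h'‖_∞ |Δ_w γ|`. Once this
factor is replaced by the constant `C ‖h'‖_∞`, what remains is Cauchy–Schwarz for `μ_γ`, applied to
`|Ω^{s+ε}_γ γ|` and `|Ω^{s−ε}_γ k|`.
-/

open Function

lemma Function.Periodic.periodic_of_hasDerivAt {F : Type*} [NormedAddCommGroup F]
    [NormedSpace ℝ F] {f f' : ℝ → F} {c : ℝ} (hf : Periodic f c)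
    (hd : ∀ x, HasDerivAt f (f' x) x) : Periodic f' c := fun x => by
  have hshift : HasDerivAt (fun y => f (y + c)) (f' (x + c)) x := (hd (x + c)).comp_add_const x c
  rw [show (fun y => f (y + c)) = f from funext hf] at hshift
  exact hshift.unique (hd x)

lemma Function.Periodic.norm_le_iSup_norm {F : Type*} [NormedAddCommGroup F] {f : ℝ → F}
    {c : ℝ} (hf : Periodic f c) (hc : c ≠ 0) (hcont : Continuous f) (x : ℝ) :
    ‖f x‖ ≤ ⨆ y, ‖f y‖ :=
  le_ciSup ((hf.comp norm).compact_of_continuous hc hcont.norm).bddAbove x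

lemma MeasureTheory.lintegral_lintegral_mul_rpow_le {α β : Type*} [MeasurableSpace α]
    [MeasurableSpace β] {μ : Measure α} {ν : Measure β} [SFinite ν] {f g : α → β → ℝ≥0∞}
    (hf : AEMeasurable (uncurry f) (μ.prod ν)) (hg : AEMeasurable (uncurry g) (μ.prod ν))
    {p q : ℝ} (hp : 0 ≤ p) (hq : 0 ≤ q) (hpq : p + q = 1) :
    ∫⁻ x, ∫⁻ y, f x y ^ p * g x y ^ q ∂ν ∂μ ≤
      (∫⁻ x, ∫⁻ y, f x y ∂ν ∂μ) ^ p * (∫⁻ x, ∫⁻ y, g x y ∂ν ∂μ) ^ q := by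
  rw [lintegral_lintegral ((hf.pow_const p).mul (hg.pow_const q)), lintegral_lintegral hf,
    lintegral_lintegral hg]
  exact ENNReal.lintegral_mul_norm_pow_le hf hg hp hq hpq

section InnerProductSpace

variable {E : Type*} [NormedAddCommGroup E] [InnerProductSpace ℝ E]

lemma abs_inner_div_norm_sq_le {u v : E} {K : ℝ} (hK : 0 ≤ K) (hvu : ‖v‖ ≤ K * ‖u‖) :
    |⟪u, v⟫ / ‖u‖ ^ 2| ≤ K := by
  rcases eq_or_ne u 0 with rfl | hu
  · simpa using hK
  have hu' : 0 < ‖u‖ := norm_pos_iff.2 hu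
  rw [abs_div, abs_of_pos (by positivity : 0 < ‖u‖ ^ 2), div_le_iff₀ (by positivity)]
  calc |⟪u, v⟫| ≤ ‖u‖ * ‖v‖ := abs_real_inner_le_norm u v
    _ ≤ ‖u‖ * (K * ‖u‖) := by gcongr
    _ = K * ‖u‖ ^ 2 := by ring

lemma ofReal_abs_inner_mul_mul_le (a b : E) {q K d : ℝ} (hq : |q| ≤ K) (hd : 0 ≤ d) :
    ENNReal.ofReal (|⟪a, b⟫ * q| * d) ≤
      ENNReal.ofReal K * (ENNReal.ofReal (‖a‖ ^ 2 * d) ^ (1 / 2 : ℝ) *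
        ENNReal.ofReal (‖b‖ ^ 2 * d) ^ (1 / 2 : ℝ)) := by
  have hsqrt (c : ℝ) (hc : 0 ≤ c) :
      ENNReal.ofReal (c ^ 2 * d) ^ (1 / 2 : ℝ) = ENNReal.ofReal (c * √d) := by
    rw [ENNReal.ofReal_rpow_of_nonneg (by positivity) (by norm_num), ← Real.sqrt_eq_rpow,
      Real.sqrt_mul (sq_nonneg c), Real.sqrt_sq hc]
  rw [hsqrt _ (norm_nonneg a), hsqrt _ (norm_nonneg b), ← ENNReal.ofReal_mul (by positivity),
    ← ENNReal.ofReal_mul ((abs_nonneg q).trans hq)]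
  refine ENNReal.ofReal_le_ofReal ?_
  calc |⟪a, b⟫ * q| * d = |⟪a, b⟫| * |q| * d := by rw [abs_mul]
    _ ≤ ‖a‖ * ‖b‖ * K * d := by gcongr; exact abs_real_inner_le_norm a b
    _ = K * (‖a‖ * √d * (‖b‖ * √d)) := by
      linear_combination (‖a‖ * ‖b‖ * K) * (Real.mul_self_sqrt hd).symm

lemma abs_inner_sub_div_norm_sub_sq_le {γ h h' : ℝ → E} {C M x w : ℝ} (hC : 0 < C)
    (hhd : ∀ x, HasDerivAt h (h' x) x) (hM : ∀ x, ‖h' x‖ ≤ M)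
    (hbil : |w| / C ≤ ‖γ (x + w) - γ x‖) :
    |⟪γ (x + w) - γ x, h (x + w) - h x⟫ / ‖γ (x + w) - γ x‖ ^ 2| ≤ C * M := by
  have hM0 : 0 ≤ M := (norm_nonneg _).trans (hM 0)
  refine abs_inner_div_norm_sq_le (by positivity) ?_
  calc ‖h (x + w) - h x‖ ≤ M * ‖x + w - x‖ :=
        convex_univ.norm_image_sub_le_of_norm_hasDerivWithin_le
          (fun y _ => (hhd y).hasDerivWithinAt) (fun y _ => hM y) trivial trivial
    _ = M * |w| := by rw [add_sub_cancel_left, Real.norm_eq_abs]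
    _ ≤ M * (C * ‖γ (x + w) - γ x‖) := by gcongr; exact (div_le_iff₀' hC).1 hbil
    _ = C * M * ‖γ (x + w) - γ x‖ := by ring

end InnerProductSpace

lemma measurable_ofReal_norm_Om_sq_mul_dens {n : ℕ} (σ : ℝ)
    {γ γ' f f' : ℝ → EuclideanSpace ℝ (Fin n)} (hγ : Measurable γ) (hγ' : Measurable γ')
    (hf : Measurable f) (hf' : Measurable f') :
    Measurable (uncurry fun x w => ENNReal.ofReal (‖Om σ γ γ' f f' x w‖ ^ 2 * dens γ γ' x w)) := by
  unfold Om Lg Dg dens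
  fun_prop

theorem stmt4_general {n : ℕ} (s ε : ℝ)
    (C : ℝ) (hC : 1 ≤ C)
    (γ γ' h h' k k' : ℝ → EuclideanSpace ℝ (Fin n))
    (hγd : ∀ x, HasDerivAt γ (γ' x) x) (hγc : Continuous γ')
    (hbil : ∀ x w : ℝ, |w| ≤ 1/2 → |w| / C ≤ ‖γ (x + w) - γ x‖)
    (hhd : ∀ x, HasDerivAt h (h' x) x) (hhc : Continuous h')
    (hhper : ∀ x, h (x + 1) = h x)
    (hkd : ∀ x, HasDerivAt k (k' x) x) (hkc : Continuous k') :
    (∫⁻ x in Set.Icc (0:ℝ) 1, ∫⁻ w in Set.Ioo (-(1:ℝ)/2) (1/2),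
        ENNReal.ofReal
          (|⟪Om (s + ε) γ γ' γ γ' x w, Om (s - ε) γ γ' k k' x w⟫ *
              (⟪γ (x + w) - γ x, h (x + w) - h x⟫ / ‖γ (x + w) - γ x‖ ^ 2)| *
            dens γ γ' x w))
      ≤ ENNReal.ofReal (C * (⨆ x : ℝ, ‖h' x‖)) *
        (∫⁻ x in Set.Icc (0:ℝ) 1, ∫⁻ w in Set.Ioo (-(1:ℝ)/2) (1/2),
          ENNReal.ofReal (‖Om (s + ε) γ γ' γ γ' x w‖ ^ 2 * dens γ γ' x w)) ^ ((1:ℝ)/2) *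
        (∫⁻ x in Set.Icc (0:ℝ) 1, ∫⁻ w in Set.Ioo (-(1:ℝ)/2) (1/2),
          ENNReal.ofReal (‖Om (s - ε) γ γ' k k' x w‖ ^ 2 * dens γ γ' x w)) ^ ((1:ℝ)/2) := by
  have hM : ∀ x, ‖h' x‖ ≤ ⨆ x : ℝ, ‖h' x‖ :=
    (Periodic.periodic_of_hasDerivAt hhper hhd).norm_le_iSup_norm one_ne_zero hhc
  have hfactor : ∀ x, ∀ w ∈ Set.Ioo (-(1:ℝ)/2) (1/2),
      |⟪γ (x + w) - γ x, h (x + w) - h x⟫ / ‖γ (x + w) - γ x‖ ^ 2| ≤ C * ⨆ x : ℝ, ‖h' x‖ :=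
    fun x w hw => abs_inner_sub_div_norm_sub_sq_le (by linarith) hhd hM
      (hbil x w (abs_le.2 ⟨by linarith [hw.1], hw.2.le⟩))
  have hγm : Measurable γ :=
    (continuous_iff_continuousAt.2 fun x => (hγd x).continuousAt).measurable
  have hkm : Measurable k :=
    (continuous_iff_continuousAt.2 fun x => (hkd x).continuousAt).measurable
  calc _ ≤ ∫⁻ x in Set.Icc (0:ℝ) 1, ∫⁻ w in Set.Ioo (-(1:ℝ)/2) (1/2),
          ENNReal.ofReal (C * ⨆ x : ℝ, ‖h' x‖) *
            (ENNReal.ofReal (‖Om (s + ε) γ γ' γ γ' x w‖ ^ 2 * dens γ γ' x w) ^ ((1:ℝ)/2) *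
              ENNReal.ofReal (‖Om (s - ε) γ γ' k k' x w‖ ^ 2 * dens γ γ' x w) ^ ((1:ℝ)/2)) :=
        lintegral_mono fun x => setLIntegral_mono' measurableSet_Ioo fun w hw =>
          ofReal_abs_inner_mul_mul_le _ _ (hfactor x w hw) (by unfold dens; positivity)
    _ = ENNReal.ofReal (C * ⨆ x : ℝ, ‖h' x‖) *
          ∫⁻ x in Set.Icc (0:ℝ) 1, ∫⁻ w in Set.Ioo (-(1:ℝ)/2) (1/2),
            ENNReal.ofReal (‖Om (s + ε) γ γ' γ γ' x w‖ ^ 2 * dens γ γ' x w) ^ ((1:ℝ)/2) *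
              ENNReal.ofReal (‖Om (s - ε) γ γ' k k' x w‖ ^ 2 * dens γ γ' x w) ^ ((1:ℝ)/2) := by
        simp only [lintegral_const_mul' _ _ ENNReal.ofReal_ne_top]
    _ ≤ _ := by
        rw [mul_assoc]
        gcongr
        exact lintegral_lintegral_mul_rpow_le
          (measurable_ofReal_norm_Om_sq_mul_dens _ hγm hγc.measurable hγm hγc.measurable
            |>.aemeasurable)
          (measurable_ofReal_norm_Om_sq_mul_dens _ hγm hγc.measurable hkm hkc.measurable
            |>.aemeasurable)
          (by norm_num) (by norm_num) (by norm_num)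

/-- Weight-shifted Cauchy–Schwarz estimate (in `[0,∞]`):
`∬ |⟨Ω^{s+ε}_γ γ, Ω^{s−ε}_γ k⟩ ⟨Δ_w γ, Δ_w h⟩/|Δ_w γ|²| dμ_γ
  ≤ C ‖h'‖_∞ (∬ |Ω^{s+ε}_γ γ|² dμ_γ)^{1/2} (∬ |Ω^{s−ε}_γ k|² dμ_γ)^{1/2}`. -/
theorem stmt4 {n : ℕ} (hn : 2 ≤ n) (s ε : ℝ) (hs : s ∈ Set.Ioo (3/2 : ℝ) 2)
    (hε : 0 < ε ∧ ε < s - 1)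
    (C : ℝ) (hC : 1 ≤ C)
    (γ γ' h h' k k' : ℝ → EuclideanSpace ℝ (Fin n))
    (hγd : ∀ x, HasDerivAt γ (γ' x) x) (hγc : Continuous γ')
    (hγper : ∀ x, γ (x + 1) = γ x)
    (harc : ∀ x, ‖γ' x‖ = 1)
    (hinj : Set.InjOn γ (Set.Ico (0:ℝ) 1))
    (hbil : ∀ x w : ℝ, |w| ≤ 1/2 → |w| / C ≤ ‖γ (x + w) - γ x‖)
    (hhd : ∀ x, HasDerivAt h (h' x) x) (hhc : Continuous h')
    (hhper : ∀ x, h (x + 1) = h x)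
    (hkd : ∀ x, HasDerivAt k (k' x) x) (hkc : Continuous k')
    (hkper : ∀ x, k (x + 1) = k x) :
    (∫⁻ x in Set.Icc (0:ℝ) 1, ∫⁻ w in Set.Ioo (-(1:ℝ)/2) (1/2),
        ENNReal.ofReal
          (|⟪Om (s + ε) γ γ' γ γ' x w, Om (s - ε) γ γ' k k' x w⟫ *
              (⟪γ (x + w) - γ x, h (x + w) - h x⟫ / ‖γ (x + w) - γ x‖ ^ 2)| *
            dens γ γ' x w))
      ≤ ENNReal.ofReal (C * (⨆ x : ℝ, ‖h' x‖)) *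
        (∫⁻ x in Set.Icc (0:ℝ) 1, ∫⁻ w in Set.Ioo (-(1:ℝ)/2) (1/2),
          ENNReal.ofReal (‖Om (s + ε) γ γ' γ γ' x w‖ ^ 2 * dens γ γ' x w)) ^ ((1:ℝ)/2) *
        (∫⁻ x in Set.Icc (0:ℝ) 1, ∫⁻ w in Set.Ioo (-(1:ℝ)/2) (1/2),
          ENNReal.ofReal (‖Om (s - ε) γ γ' k k' x w‖ ^ 2 * dens γ γ' x w)) ^ ((1:ℝ)/2) :=
  stmt4_general s ε C hC γ γ' h h' k k' hγd hγc hbil hhd hhc hhper hkd hkc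
end

section
/- Let γ : ℝ → ℝⁿ be a 1-periodic C¹ curve with |γ'(x)| = 1 for all x, and let h : ℝ → ℝⁿ be 1-periodic and C¹ with ⟨γ'(x), h'(x)⟩ = 0 for all x. Then for all x ∈ ℝ and w ∈ (−1/2,1/2): ⟨ h(x+w) − h(x) − h'(x)·⟨γ'(x), γ(x+w) − γ(x)⟩ , γ'(x) ⟩ = w · ∫₀¹ ⟨ h'(x+θw), γ'(x) − γ'(x+θw) ⟩ dθ. -/
open MeasureTheory
open scoped RealInnerProductSpace

theorem inner_sub_eq_mul_integral_inner_deriv {E : Type*} [NormedAddCommGroup E]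
    [InnerProductSpace ℝ E] {f f' : ℝ → E} (hf : ∀ t, HasDerivAt f (f' t) t)
    (hf' : Continuous f') (v : E) (x w : ℝ) :
    ⟪f (x + w) - f x, v⟫ = w * ∫ θ in (0:ℝ)..1, ⟪f' (x + θ * w), v⟫ := by
  have hderiv (t : ℝ) : HasDerivAt (fun s ↦ ⟪f s, v⟫) ⟪f' t, v⟫ t := by
    simpa using (hf t).inner ℝ (hasDerivAt_const t v)
  have hcont : ContinuousOn (fun θ : ℝ ↦ ⟪f' (x + θ • w), v⟫) (Set.Icc 0 1) := by fun_prop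
  rw [inner_sub_left]
  exact (intervalIntegral.integral_unitInterval_deriv_eq_sub (f := fun s ↦ ⟪f s, v⟫)
    (f' := fun s ↦ ⟪f' s, v⟫) hcont fun t _ ↦ hderiv _).symm

theorem stmt6_general {n : ℕ}
    (γ γ' h h' : ℝ → EuclideanSpace ℝ (Fin n))
    (hhd : ∀ x, HasDerivAt h (h' x) x) (hhc : Continuous h')
    (horth : ∀ x, ⟪γ' x, h' x⟫ = 0)
    (x w : ℝ) :
    ⟪h (x + w) - h x - ⟪γ' x, γ (x + w) - γ x⟫ • h' x, γ' x⟫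
      = w * ∫ θ in (0:ℝ)..1, ⟪h' (x + θ * w), γ' x - γ' (x + θ * w)⟫ := by
  have tangent_orth (y : ℝ) : ⟪h' y, γ' y⟫ = 0 := by rw [real_inner_comm]; exact horth y
  calc ⟪h (x + w) - h x - ⟪γ' x, γ (x + w) - γ x⟫ • h' x, γ' x⟫
      = ⟪h (x + w) - h x, γ' x⟫ := by
        rw [inner_sub_left _ (_ • _), real_inner_smul_left, tangent_orth, mul_zero, sub_zero]
    _ = w * ∫ θ in (0:ℝ)..1, ⟪h' (x + θ * w), γ' x⟫ :=
        inner_sub_eq_mul_integral_inner_deriv hhd hhc _ x w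
    _ = w * ∫ θ in (0:ℝ)..1, ⟪h' (x + θ * w), γ' x - γ' (x + θ * w)⟫ := by
        simp only [inner_sub_right, tangent_orth, sub_zero]

/-- For an arclength curve `γ` and a perturbation `h` with
`⟨γ', h'⟩ ≡ 0`, the tangential part of `L_γ h` satisfies
`⟨Δ_w h(x) − ⟨γ'(x), Δ_w γ(x)⟩ h'(x), γ'(x)⟩
  = w ∫₀¹ ⟨h'(x+θw), γ'(x) − γ'(x+θw)⟩ dθ`. -/
theorem stmt6 {n : ℕ} (hn : 2 ≤ n)
    (γ γ' h h' : ℝ → EuclideanSpace ℝ (Fin n))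
    (hγd : ∀ x, HasDerivAt γ (γ' x) x) (hγc : Continuous γ')
    (hγper : ∀ x, γ (x + 1) = γ x)
    (harc : ∀ x, ‖γ' x‖ = 1)
    (hhd : ∀ x, HasDerivAt h (h' x) x) (hhc : Continuous h')
    (hhper : ∀ x, h (x + 1) = h x)
    (horth : ∀ x, ⟪γ' x, h' x⟫ = 0)
    (x w : ℝ) (hw : w ∈ Set.Ioo (-(1:ℝ)/2) (1/2)) :
    ⟪h (x + w) - h x - ⟪γ' x, γ (x + w) - γ x⟫ • h' x, γ' x⟫
      = w * ∫ θ in (0:ℝ)..1, ⟪h' (x + θ * w), γ' x - γ' (x + θ * w)⟫ :=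
  stmt6_general γ γ' h h' hhd hhc horth x w
end

section
/- Let H be a real Hilbert space and E : H → ℝ Fréchet differentiable. Let ξ : [0,∞) → H be differentiable with ξ'(t) = −∇E(ξ(t)) for all t ≥ 0. Suppose there exist γ∞ ∈ H and a sequence t_k → ∞ with ξ(t_k) → γ∞ in H, and suppose E satisfies the Łojasiewicz–Simon inequality at γ∞ with constants Z > 0, δ ∈ (0,1], θ ∈ [1/2,1). Then ξ(t) converges strongly to γ∞ in H as t → ∞. -/
/-!
Along the flow the energy decreases at rate `‖∇E‖²`, and it tends to `E γ∞` along `t_k`. If it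
reaches `E γ∞` in finite time, the gradient vanishes from then on and the flow is stationary.
Otherwise `φ = (E ∘ ξ - E γ∞) ^ (1 - θ)` is differentiable, and wherever `ξ` lies in the
`δ`-ball around `γ∞` the Łojasiewicz–Simon inequality gives `‖ξ'‖ ≤ -φ' / ((1 - θ) Z)`. So the
path after time `a` has length at most `φ(a) / ((1 - θ) Z)` as long as it stays in the ball; taking
`a = t_k` with `ξ(t_k)` close to `γ∞` and `φ(t_k)` small, it can never leave.
-/

open Filter Set Topology

section Fence

variable {F : Type*} [NormedAddCommGroup F] [NormedSpace ℝ F]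
  {f f' : ℝ → F} {φ φ' : ℝ → ℝ} {c : F} {r : ℝ}

theorem norm_sub_le_of_norm_deriv_lt_neg_deriv {a t : ℝ}
    (hf : ∀ x ≥ a, HasDerivAt f (f' x) x) (hφ : ∀ x ≥ a, HasDerivAt φ (φ' x) x)
    (hφ_nonneg : ∀ x ≥ a, 0 ≤ φ x) (ha : ‖f a - c‖ + φ a < r)
    (hslow : ∀ x ≥ a, ‖f x - c‖ < r → ‖f' x‖ < -φ' x) (hat : a ≤ t) :
    ‖f t - c‖ ≤ ‖f a - c‖ + φ a := by
  set B := fun s => ‖f a - c‖ + (φ a - φ s)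
  have hB : ∀ x ≥ a, HasDerivAt B (-φ' x) x := fun x hx =>
    ((hφ x hx).const_sub _).const_add _
  have hB_lt : ∀ x ≥ a, B x ≤ ‖f a - c‖ + φ a := fun x hx => by
    linarith [hφ_nonneg x hx]
  have hfence := image_norm_le_of_norm_deriv_right_lt_deriv_boundary'
    (f := fun s => f s - c) (a := a) (b := t)
    (fun x hx => ((hf x hx.1).sub_const c).continuousAt.continuousWithinAt)
    (fun x hx => ((hf x hx.1).sub_const c).hasDerivWithinAt) (by simp [B])
    (fun x hx => (hB x hx.1).continuousAt.continuousWithinAt)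
    (fun x hx => (hB x hx.1).hasDerivWithinAt)
    (fun x hx htouch => hslow x hx.1 (htouch ▸ (hB_lt x hx.1).trans_lt ha))
    ⟨hat, le_rfl⟩
  exact hfence.trans (hB_lt t hat)

theorem tendsto_of_norm_deriv_lt_neg_deriv {t₀ : ℝ} {tk : ℕ → ℝ}
    (hf : ∀ x ≥ t₀, HasDerivAt f (f' x) x) (hφ : ∀ x ≥ t₀, HasDerivAt φ (φ' x) x)
    (hφ_nonneg : ∀ x ≥ t₀, 0 ≤ φ x) (hr : 0 < r)
    (hslow : ∀ x ≥ t₀, ‖f x - c‖ < r → ‖f' x‖ < -φ' x)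
    (htk : Tendsto tk atTop atTop) (hf_tk : Tendsto (f ∘ tk) atTop (𝓝 c))
    (hφ_tk : Tendsto (φ ∘ tk) atTop (𝓝 0)) :
    Tendsto f atTop (𝓝 c) := by
  rw [Metric.tendsto_atTop]
  intro ε hε
  have hsmall : Tendsto (fun j => ‖f (tk j) - c‖ + φ (tk j)) atTop (𝓝 0) := by
    simpa using (tendsto_iff_norm_sub_tendsto_zero.1 hf_tk).add hφ_tk
  obtain ⟨j, hj, htkj⟩ :=
    ((hsmall.eventually (gt_mem_nhds (lt_min hε hr))).and (htk.eventually_ge_atTop t₀)).exists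
  refine ⟨tk j, fun t ht => ?_⟩
  rw [dist_eq_norm]
  have hjr := hj.trans_le (min_le_right ε r)
  exact (norm_sub_le_of_norm_deriv_lt_neg_deriv (fun x hx => hf x (htkj.trans hx))
    (fun x hx => hφ x (htkj.trans hx)) (fun x hx => hφ_nonneg x (htkj.trans hx)) hjr
    (fun x hx => hslow x (htkj.trans hx)) ht).trans_lt (hj.trans_le (min_le_left ε r))

end Fence

theorem lt_two_mul_sq_mul_rpow_neg_div {Z e θ G : ℝ} (hZ : 0 < Z) (he : 0 < e)
    (hG : Z * e ^ θ ≤ G) : G < 2 * G ^ 2 * e ^ (-θ) / Z := by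
  have heθ : 0 < e ^ θ := Real.rpow_pos_of_pos he θ
  have hGpos : 0 < G := (mul_pos hZ heθ).trans_le hG
  have hinv : e ^ (-θ) = (e ^ θ)⁻¹ := Real.rpow_neg he.le θ
  rw [hinv, lt_div_iff₀ hZ]
  have : Z ≤ G * (e ^ θ)⁻¹ := by rwa [le_mul_inv_iff₀ heθ]
  nlinarith

section GradientFlow

variable {H : Type*} [NormedAddCommGroup H] [InnerProductSpace ℝ H] [CompleteSpace H]
  {E : H → ℝ} {ξ : ℝ → H} {t₀ : ℝ}

theorem hasDerivAt_comp_of_gradient_flow {t : ℝ} (hE : DifferentiableAt ℝ E (ξ t))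
    (hξ : HasDerivAt ξ (-gradient E (ξ t)) t) :
    HasDerivAt (fun s => E (ξ s)) (-‖gradient E (ξ t)‖ ^ 2) t := by
  refine (hE.hasGradientAt.hasFDerivAt.comp_hasDerivAt t hξ).congr_deriv ?_
  rw [InnerProductSpace.toDual_apply_apply, inner_neg_right, real_inner_self_eq_norm_sq]

theorem antitoneOn_comp_of_gradient_flow (hE : Differentiable ℝ E)
    (hξ : ∀ t ≥ t₀, HasDerivAt ξ (-gradient E (ξ t)) t) :
    AntitoneOn (fun s => E (ξ s)) (Ici t₀) := by
  have hder := fun t (ht : t ≥ t₀) => hasDerivAt_comp_of_gradient_flow (hE (ξ t)) (hξ t ht)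
  refine antitoneOn_of_hasDerivWithinAt_nonpos (convex_Ici t₀)
    (fun x hx => (hder x hx).continuousAt.continuousWithinAt)
    (fun x hx => (hder x (interior_subset hx)).hasDerivWithinAt) fun x _ => ?_
  exact neg_nonpos.2 (sq_nonneg _)

theorem eq_of_gradient_flow_of_comp_eq (hE : Differentiable ℝ E) {t₁ : ℝ}
    (hξ : ∀ t ≥ t₁, HasDerivAt ξ (-gradient E (ξ t)) t)
    (hconst : ∀ t ≥ t₁, E (ξ t) = E (ξ t₁)) : ∀ t ≥ t₁, ξ t = ξ t₁ := by
  have hgrad : ∀ x ≥ t₁, gradient E (ξ x) = 0 := by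
    intro x hx
    have hzero : HasDerivWithinAt (fun s => E (ξ s)) 0 (Ici x) x :=
      (hasDerivWithinAt_const x _ (E (ξ t₁))).congr (fun y hy => hconst y (hx.trans hy))
        (hconst x hx)
    have hder := hasDerivAt_comp_of_gradient_flow (hE (ξ x)) (hξ x hx)
    simpa using (uniqueDiffWithinAt_Ici x).eq_deriv _ hder.hasDerivWithinAt hzero
  intro t ht
  refine constant_of_has_deriv_right_zero (f := ξ) (a := t₁) (b := t)
    (fun x hx => (hξ x hx.1).continuousAt.continuousWithinAt)
    (fun x hx => ?_) t ⟨ht, le_rfl⟩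
  simpa [hgrad x hx.1] using (hξ x hx.1).hasDerivWithinAt (s := Ici x)

theorem tendsto_of_gradient_flow_of_lojasiewicz (hE : Differentiable ℝ E)
    (hξ : ∀ t ≥ t₀, HasDerivAt ξ (-gradient E (ξ t)) t)
    {γ : H} {tk : ℕ → ℝ} (htk : Tendsto tk atTop atTop) (hsub : Tendsto (ξ ∘ tk) atTop (𝓝 γ))
    {Z δ θ : ℝ} (hZ : 0 < Z) (hδ : 0 < δ) (hθ : θ < 1)
    (hLS : ∀ η : H, ‖η - γ‖ < δ → Z * |E η - E γ| ^ θ ≤ ‖gradient E η‖)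
    (hgt : ∀ t ≥ t₀, E γ < E (ξ t)) : Tendsto ξ atTop (𝓝 γ) := by
  have h1θ : 0 < 1 - θ := sub_pos.2 hθ
  -- the factor 2 makes the speed bound strict, as the fencing argument requires
  set φ := fun t => 2 * (E (ξ t) - E γ) ^ (1 - θ) / ((1 - θ) * Z)
  have hφ : ∀ t ≥ t₀, HasDerivAt φ
      (-(2 * ‖gradient E (ξ t)‖ ^ 2 * (E (ξ t) - E γ) ^ (-θ) / Z)) t := fun t ht =>
    ((((hasDerivAt_comp_of_gradient_flow (hE (ξ t)) (hξ t ht)).sub_const (E γ)).rpow_const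
      (.inl (sub_pos.2 (hgt t ht)).ne')).const_mul 2).div_const _ |>.congr_deriv <| by
        rw [sub_sub_cancel_left]
        field_simp
  have hslow : ∀ t ≥ t₀, ‖ξ t - γ‖ < δ → ‖-gradient E (ξ t)‖ <
      -(-(2 * ‖gradient E (ξ t)‖ ^ 2 * (E (ξ t) - E γ) ^ (-θ) / Z)) := by
    intro t ht hball
    have he := sub_pos.2 (hgt t ht)
    rw [norm_neg, neg_neg]
    exact lt_two_mul_sq_mul_rpow_neg_div hZ he (abs_of_pos he ▸ hLS (ξ t) hball)
  have hφ_nonneg : ∀ t ≥ t₀, 0 ≤ φ t := fun t ht =>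
    div_nonneg (mul_nonneg zero_le_two (Real.rpow_nonneg (sub_pos.2 (hgt t ht)).le _))
      (mul_pos h1θ hZ).le
  refine tendsto_of_norm_deriv_lt_neg_deriv hξ hφ hφ_nonneg hδ hslow htk hsub ?_
  have hE_tk : Tendsto (fun j => E (ξ (tk j)) - E γ) atTop (𝓝 0) := by
    simpa using ((hE.continuous.tendsto γ).comp hsub).sub_const (E γ)
  simpa [φ, Function.comp_def, Real.zero_rpow h1θ.ne'] using
    (((Real.continuousAt_rpow_const 0 _ (.inr h1θ.le)).tendsto.comp hE_tk).const_mul 2).div_const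
      ((1 - θ) * Z)

end GradientFlow

/-- Full convergence of a gradient flow from subconvergence via the
Łojasiewicz–Simon inequality: if `ξ' = −∇E(ξ)` on `[0,∞)`, `ξ(t_k) → γlim` along some
sequence `t_k → ∞`, and `E` satisfies a Łojasiewicz–Simon inequality at `γlim`, then
`ξ(t) → γlim` strongly as `t → ∞`. -/
theorem stmt10 {H : Type*} [NormedAddCommGroup H] [InnerProductSpace ℝ H]
    [CompleteSpace H]
    (E : H → ℝ) (hE : Differentiable ℝ E)
    (ξ : ℝ → H) (hξ : ∀ t : ℝ, 0 ≤ t → HasDerivAt ξ (-(gradient E (ξ t))) t)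
    (γlim : H) (tk : ℕ → ℝ)
    (htk : Tendsto tk atTop atTop)
    (hsub : Tendsto (fun j => ξ (tk j)) atTop (nhds γlim))
    (Z δ θ : ℝ) (hZ : 0 < Z) (hδ : δ ∈ Set.Ioc (0:ℝ) 1)
    (hθ : θ ∈ Set.Ico (1/2 : ℝ) 1)
    (hLS : ∀ η : H, ‖η - γlim‖ < δ → Z * |E η - E γlim| ^ θ ≤ ‖gradient E η‖) :
    Tendsto ξ atTop (nhds γlim) := by
  have hanti := antitoneOn_comp_of_gradient_flow hE hξ
  have hE_tk : Tendsto (fun j => E (ξ (tk j))) atTop (𝓝 (E γlim)) :=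
    (hE.continuous.tendsto γlim).comp hsub
  have hlow : ∀ t ≥ 0, E γlim ≤ E (ξ t) := fun t ht =>
    le_of_tendsto hE_tk <| (htk.eventually_ge_atTop t).mono fun j hj =>
      hanti ht (le_trans ht hj) hj
  by_cases hdeg : ∃ t₁ ≥ 0, E (ξ t₁) = E γlim
  · obtain ⟨t₁, ht₁, hEt₁⟩ := hdeg
    have hconst : ∀ t ≥ t₁, ξ t = ξ t₁ := eq_of_gradient_flow_of_comp_eq hE
      (fun t ht => hξ t (ht₁.trans ht)) fun t ht =>
      le_antisymm (hanti ht₁ (ht₁.trans ht) ht) (hEt₁ ▸ hlow t (ht₁.trans ht))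
    have hconst_ev : ξ =ᶠ[atTop] fun _ => ξ t₁ := eventually_atTop.2 ⟨t₁, hconst⟩
    have hlim : ξ t₁ = γlim :=
      tendsto_nhds_unique ((tendsto_const_nhds.congr' hconst_ev.symm).comp htk) hsub
    exact hlim ▸ tendsto_const_nhds.congr' hconst_ev.symm
  · exact tendsto_of_gradient_flow_of_lojasiewicz hE hξ htk hsub hZ hδ.1 hθ.2 hLS fun t ht =>
      (hlow t ht).lt_of_ne' fun h => hdeg ⟨t, ht, h⟩
end

section
/- Let H be a real Hilbert space, E : H → ℝ Fréchet differentiable, and ξ : [0,∞) → H differentiable with ξ'(t) = −∇E(ξ(t)) for all t ≥ 0. Let γ∞ ∈ H, Z > 0, δ ∈ (0,1], θ ∈ [1/2,1), and suppose ‖∇E(η)‖ ≥ Z|E(η) − E(γ∞)|^θ for all η with ‖η − γ∞‖ < δ. If t ≥ 0 satisfies ‖ξ(t) − γ∞‖ < δ and E(ξ(t)) > E(γ∞), then the function r ↦ (E(ξ(r)) − E(γ∞))^{1−θ} is differentiable at t with derivative −(1−θ)(E(ξ(t)) − E(γ∞))^{−θ} ‖∇E(ξ(t))‖², and in particular its derivative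 at t is ≤ −(1−θ) Z ‖∇E(ξ(t))‖. -/
/-! Along the flow, `d/dt E(ξ t) = ⟪∇E(ξ t), ξ' t⟫ = -‖∇E(ξ t)‖²`, and the chain rule for
`x ↦ x ^ (1 - θ)` at the positive energy gap gives the derivative. The Łojasiewicz–Simon inequality
`Z (E(ξ t) - E γ∞) ^ θ ≤ ‖∇E(ξ t)‖` says exactly that `(E(ξ t) - E γ∞) ^ (-θ) ‖∇E(ξ t)‖ ≥ Z`,
which bounds the derivative. -/

open InnerProductSpace

section GradientFlow

variable {H : Type*} [NormedAddCommGroup H] [InnerProductSpace ℝ H] [CompleteSpace H]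

theorem HasGradientAt.hasDerivAt_comp {f : H → ℝ} {g v : H} {γ : ℝ → H} {t : ℝ}
    (hf : HasGradientAt f g (γ t)) (hγ : HasDerivAt γ v t) :
    HasDerivAt (fun r => f (γ r)) ⟪g, v⟫_ℝ t := by
  exact (hf.hasFDerivAt.comp_hasDerivAt t hγ).congr_deriv toDual_apply_apply

theorem hasDerivAt_comp_of_hasDerivAt_neg_gradient {E : H → ℝ} {ξ : ℝ → H} {t : ℝ}
    (hE : DifferentiableAt ℝ E (ξ t)) (hξ : HasDerivAt ξ (-gradient E (ξ t)) t) :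
    HasDerivAt (fun r => E (ξ r)) (-‖gradient E (ξ t)‖ ^ 2) t := by
  simpa [inner_neg_right, real_inner_self_eq_norm_sq] using hE.hasGradientAt.hasDerivAt_comp hξ

end GradientFlow

theorem mul_mul_le_mul_rpow_neg_mul_sq {a c Z G θ : ℝ} (ha : 0 < a) (hc : 0 ≤ c) (hG : 0 ≤ G)
    (hLS : Z * a ^ θ ≤ G) : c * Z * G ≤ c * a ^ (-θ) * G ^ 2 := by
  have hZ : Z ≤ a ^ (-θ) * G := by
    rw [Real.rpow_neg ha.le, inv_mul_eq_div, le_div_iff₀ (Real.rpow_pos_of_pos ha θ)]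
    exact hLS
  calc c * Z * G ≤ c * (a ^ (-θ) * G) * G := by gcongr
    _ = c * a ^ (-θ) * G ^ 2 := by ring

theorem stmt11_general {H : Type*} [NormedAddCommGroup H] [InnerProductSpace ℝ H]
    [CompleteSpace H]
    (E : H → ℝ) (hE : Differentiable ℝ E)
    (ξ : ℝ → H) (hξ : ∀ t : ℝ, 0 ≤ t → HasDerivAt ξ (-(gradient E (ξ t))) t)
    (γlim : H) (Z δ θ : ℝ)
    (hθ : θ ∈ Set.Ico (1/2 : ℝ) 1)
    (hLS : ∀ η : H, ‖η - γlim‖ < δ → Z * |E η - E γlim| ^ θ ≤ ‖gradient E η‖)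
    (t : ℝ) (ht : 0 ≤ t) (hclose : ‖ξ t - γlim‖ < δ) (hpos : E γlim < E (ξ t)) :
    HasDerivAt (fun r : ℝ => (E (ξ r) - E γlim) ^ (1 - θ))
        (-((1 - θ) * (E (ξ t) - E γlim) ^ (-θ) * ‖gradient E (ξ t)‖ ^ 2)) t
    ∧ -((1 - θ) * (E (ξ t) - E γlim) ^ (-θ) * ‖gradient E (ξ t)‖ ^ 2)
        ≤ -((1 - θ) * Z * ‖gradient E (ξ t)‖) := by
  have hgap : 0 < E (ξ t) - E γlim := sub_pos.mpr hpos
  have hgapDeriv : HasDerivAt (fun r => E (ξ r) - E γlim) (-‖gradient E (ξ t)‖ ^ 2) t :=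
    (hasDerivAt_comp_of_hasDerivAt_neg_gradient (hE (ξ t)) (hξ t ht)).sub_const _
  constructor
  · convert hgapDeriv.rpow_const (p := 1 - θ) (Or.inl hgap.ne') using 1
    rw [sub_sub_cancel_left]
    ring
  · have hLSt := hLS (ξ t) hclose
    rw [abs_of_pos hgap] at hLSt
    exact neg_le_neg <| mul_mul_le_mul_rpow_neg_mul_sq hgap (sub_nonneg.mpr hθ.2.le)
      (norm_nonneg _) hLSt

/-- Pointwise differential inequality for
`H(r) = (E(ξ(r)) − E(γ∞))^{1−θ}` along the gradient flow: at a time `t` where the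
Łojasiewicz–Simon inequality applies, `H` has derivative
`−(1−θ)(E(ξ(t))−E(γ∞))^{−θ}‖∇E(ξ(t))‖²`, which is `≤ −(1−θ)Z‖∇E(ξ(t))‖`. -/
theorem stmt11 {H : Type*} [NormedAddCommGroup H] [InnerProductSpace ℝ H]
    [CompleteSpace H]
    (E : H → ℝ) (hE : Differentiable ℝ E)
    (ξ : ℝ → H) (hξ : ∀ t : ℝ, 0 ≤ t → HasDerivAt ξ (-(gradient E (ξ t))) t)
    (γlim : H) (Z δ θ : ℝ) (hZ : 0 < Z) (hδ : δ ∈ Set.Ioc (0:ℝ) 1)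
    (hθ : θ ∈ Set.Ico (1/2 : ℝ) 1)
    (hLS : ∀ η : H, ‖η - γlim‖ < δ → Z * |E η - E γlim| ^ θ ≤ ‖gradient E η‖)
    (t : ℝ) (ht : 0 ≤ t) (hclose : ‖ξ t - γlim‖ < δ) (hpos : E γlim < E (ξ t)) :
    HasDerivAt (fun r : ℝ => (E (ξ r) - E γlim) ^ (1 - θ))
        (-((1 - θ) * (E (ξ t) - E γlim) ^ (-θ) * ‖gradient E (ξ t)‖ ^ 2)) t
    ∧ -((1 - θ) * (E (ξ t) - E γlim) ^ (-θ) * ‖gradient E (ξ t)‖ ^ 2)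
        ≤ -((1 - θ) * Z * ‖gradient E (ξ t)‖) :=
  stmt11_general E hE ξ hξ γlim Z δ θ hθ hLS t ht hclose hpos
end

section
/- Let (X, d) be a metric space, let a < b be real numbers, and let ξ : (a,b) → X be a map of finite total variation, i.e. there is M < ∞ such that for every finite increasing sequence a < t₀ < t₁ < ⋯ < t_m < b one has Σ_{i=0}^{m−1} d(ξ(t_i), ξ(t_{i+1})) ≤ M. Assume that every Cauchy sequence in X all of whose terms lie in the image ξ((a,b)) converges in X. Then there exists L ∈ X such that ξ(t) → L as t → b from the left. -/
open Filter

lemma stmt13_osc {X : Type*} [MetricSpace X] (a b : ℝ) (hab : a < b)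
    (ξ : ℝ → X) (M : ℝ)
    (hTV : ∀ (m : ℕ) (t : ℕ → ℝ), StrictMono t →
      (∀ i ≤ m, t i ∈ Set.Ioo a b) →
      ∑ i ∈ Finset.range m, dist (ξ (t i)) (ξ (t (i + 1))) ≤ M) :
    ∀ ε > 0, ∃ c ∈ Set.Ioo a b, ∀ s ∈ Set.Ioo c b, ∀ s' ∈ Set.Ioo c b,
      dist (ξ s) (ξ s') < ε := by
  classical
  set A : Set ℝ := {r | ∃ (m : ℕ) (t : ℕ → ℝ), StrictMono t ∧
      (∀ i ≤ m, t i ∈ Set.Ioo a b) ∧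
      r = ∑ i ∈ Finset.range m, dist (ξ (t i)) (ξ (t (i + 1)))} with hA
  have hA0 : (0 : ℝ) ∈ A := by
    refine ⟨0, fun i => (a + b) / 2 + i, ?_, ?_, by simp⟩
    · intro x y hxy
      have : (x : ℝ) < y := by exact_mod_cast hxy
      linarith
    · intro i hi
      interval_cases i
      constructor <;> · simp; linarith
  have hAbdd : BddAbove A := by
    refine ⟨M, fun r hr => ?_⟩
    obtain ⟨m, t, ht1, ht2, rfl⟩ := hr
    exact hTV m t ht1 ht2
  set V := sSup A with hV
  intro ε hε
  obtain ⟨r, hrA, hrV⟩ := exists_lt_of_lt_csSup ⟨0, hA0⟩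
    (show V - ε < V by linarith [le_csSup hAbdd hA0])
  obtain ⟨m, t, ht1, ht2, hr⟩ := hrA
  refine ⟨t m, ht2 m le_rfl, ?_⟩
  have key : ∀ s s', t m < s → s < s' → s' < b → dist (ξ s) (ξ s') < ε := by
    intro s s' hs hss' hs'b
    have habm : a < t m := (ht2 m le_rfl).1
    set t' : ℕ → ℝ := fun i => if i ≤ m then t i else if i = m + 1 then s
      else s' + ((i - (m + 2) : ℕ) : ℝ) with ht'
    have e0 : ∀ i ≤ m, t' i = t i := fun i hi => by simp [ht', hi]
    have e1 : t' (m + 1) = s := by simp [ht']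
    have e2 : t' (m + 2) = s' := by
      have h1 : ¬ (m + 2 ≤ m) := by omega
      have h2 : ¬ (m + 2 = m + 1) := by omega
      simp [ht', h1, h2]
    have e3 : ∀ i, m + 2 ≤ i → t' i = s' + ((i - (m + 2) : ℕ) : ℝ) := by
      intro i hi
      have h1 : ¬ (i ≤ m) := by omega
      have h2 : ¬ (i = m + 1) := by omega
      simp [ht', h1, h2]
    have hmono : StrictMono t' := by
      apply strictMono_nat_of_lt_succ
      intro i
      by_cases h1 : i + 1 ≤ m
      · rw [e0 i (by omega), e0 (i+1) h1]; exact ht1 (Nat.lt_succ_self i)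
      · by_cases h2 : i = m
        · subst h2; rw [e0 i le_rfl, e1]; exact hs
        · by_cases h3 : i = m + 1
          · subst h3; rw [e1, e2]; exact hss'
          · have h4 : m + 2 ≤ i := by omega
            rw [e3 i h4, e3 (i+1) (by omega)]
            have : (i - (m + 2) : ℕ) < (i + 1 - (m + 2) : ℕ) := by omega
            have : ((i - (m + 2) : ℕ) : ℝ) < ((i + 1 - (m + 2) : ℕ) : ℝ) := by
              exact_mod_cast this
            linarith
    have hmem : ∀ i ≤ m + 2, t' i ∈ Set.Ioo a b := by
      intro i hi
      by_cases h1 : i ≤ m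
      · rw [e0 i h1]; exact ht2 i h1
      · by_cases h2 : i = m + 1
        · subst h2; rw [e1]; exact ⟨by linarith, by linarith⟩
        · have : i = m + 2 := by omega
          subst this; rw [e2]; exact ⟨by linarith, hs'b⟩
    have hsumA : (∑ i ∈ Finset.range (m + 2), dist (ξ (t' i)) (ξ (t' (i + 1)))) ∈ A :=
      ⟨m + 2, t', hmono, hmem, rfl⟩
    have hsumle : (∑ i ∈ Finset.range (m + 2), dist (ξ (t' i)) (ξ (t' (i + 1)))) ≤ V :=
      le_csSup hAbdd hsumA
    have hsplit : (∑ i ∈ Finset.range (m + 2), dist (ξ (t' i)) (ξ (t' (i + 1)))) =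
        r + dist (ξ (t m)) (ξ s) + dist (ξ s) (ξ s') := by
      rw [Finset.sum_range_succ, Finset.sum_range_succ]
      have : ∑ i ∈ Finset.range m, dist (ξ (t' i)) (ξ (t' (i + 1))) = r := by
        rw [hr]
        apply Finset.sum_congr rfl
        intro i hi
        rw [Finset.mem_range] at hi
        rw [e0 i (by omega), e0 (i+1) (by omega)]
      rw [this, e0 m le_rfl, e1, e2]
    rw [hsplit] at hsumle
    have := dist_nonneg (x := ξ (t m)) (y := ξ s)
    linarith
  intro s hsmem s' hs'mem
  rcases lt_trichotomy s s' with h | h | h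
  · exact key s s' hsmem.1 h hs'mem.2
  · simp [h, hε]
  · rw [dist_comm]; exact key s' s hs'mem.1 h hsmem.2

/-- A curve `ξ : (a,b) → X` of finite total variation in a metric
space converges at the right endpoint, provided every Cauchy sequence with terms in
the image of `ξ` converges in `X`. -/
theorem stmt13 {X : Type*} [MetricSpace X] (a b : ℝ) (hab : a < b)
    (ξ : ℝ → X) (M : ℝ)
    (hTV : ∀ (m : ℕ) (t : ℕ → ℝ), StrictMono t →
      (∀ i ≤ m, t i ∈ Set.Ioo a b) →
      ∑ i ∈ Finset.range m, dist (ξ (t i)) (ξ (t (i + 1))) ≤ M)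
    (hcauchy : ∀ u : ℕ → X, (∀ j, u j ∈ ξ '' Set.Ioo a b) → CauchySeq u →
      ∃ L, Tendsto u atTop (nhds L)) :
    ∃ L, Tendsto ξ (nhdsWithin b (Set.Iio b)) (nhds L) := by
  have osc := stmt13_osc a b hab ξ M hTV
  -- the approximating sequence
  set s : ℕ → ℝ := fun n => b - (b - a) / (n + 2) with hs
  have hsmem : ∀ n, s n ∈ Set.Ioo a b := by
    intro n
    have h2 : (0 : ℝ) < (n : ℝ) + 2 := by positivity
    constructor
    · have : (b - a) / ((n : ℝ) + 2) ≤ (b - a) / 2 := by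
        apply div_le_div_of_nonneg_left (by linarith) (by norm_num) (by linarith)
      simp only [hs]; linarith
    · have : 0 < (b - a) / ((n : ℝ) + 2) := div_pos (by linarith) h2
      simp only [hs]; linarith
  have hstend : Tendsto s atTop (nhds b) := by
    have h1 : Tendsto (fun n : ℕ => (b - a) / (n + 2)) atTop (nhds 0) := by
      apply Tendsto.div_atTop tendsto_const_nhds
      exact tendsto_atTop_add_const_right atTop 2 tendsto_natCast_atTop_atTop
    have := tendsto_const_nhds (x := b) (f := atTop (α := ℕ)) |>.sub h1
    simpa using this
  have hucauchy : CauchySeq (fun n => ξ (s n)) := by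
    rw [Metric.cauchySeq_iff]
    intro ε hε
    obtain ⟨c, hc, hosc⟩ := osc ε hε
    have : ∀ᶠ n in atTop, s n ∈ Set.Ioi c :=
      hstend (Ioi_mem_nhds hc.2)
    obtain ⟨N, hN⟩ := this.exists_forall_of_atTop
    exact ⟨N, fun p hp q hq => hosc _ ⟨hN p hp, (hsmem p).2⟩ _ ⟨hN q hq, (hsmem q).2⟩⟩
  obtain ⟨L, hL⟩ := hcauchy _ (fun j => ⟨s j, hsmem j, rfl⟩) hucauchy
  refine ⟨L, ?_⟩
  rw [Metric.tendsto_nhds]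
  intro ε hε
  obtain ⟨c, hc, hosc⟩ := osc (ε / 2) (by linarith)
  have h1 : ∀ᶠ n in atTop, s n ∈ Set.Ioi c := hstend (Ioi_mem_nhds hc.2)
  have h2 : ∀ᶠ n in atTop, dist (ξ (s n)) L < ε / 2 := by
    have := hL (Metric.ball_mem_nhds L (show (0:ℝ) < ε / 2 by linarith))
    simpa [Metric.mem_ball] using this
  obtain ⟨n, hn1, hn2⟩ := (h1.and h2).exists
  have hmem : Set.Ioo c b ∈ nhdsWithin b (Set.Iio b) :=
    Ioo_mem_nhdsLT_of_mem ⟨hc.2, le_rfl⟩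
  filter_upwards [hmem] with t ht
  calc dist (ξ t) L ≤ dist (ξ t) (ξ (s n)) + dist (ξ (s n)) L := dist_triangle _ _ _
    _ < ε / 2 + ε / 2 := by
        have := hosc t ht (s n) ⟨hn1, (hsmem n).2⟩
        linarith
    _ = ε := by ring
end

section
/- Let X, Y be real Banach spaces, U ⊆ X open, x∞ ∈ U, and φ : U → Y Fréchet differentiable and continuous at x∞. Assume there is c > 0 such that for every x ∈ U the derivative Dφₓ : X → Y is surjective and satisfies ‖v‖_X ≤ c ‖Dφₓ(v)‖_Y for all v ∈ X. Let W ⊆ Y be open with φ(U) ⊆ W, let E : W → ℝ be Fréchet differentiable, and suppose there are Z > 0, σ > 0, θ ∈ [1/2,1) with ‖DE_y‖_{Y*} ≥ Z |E(y) − E(φ(x∞))|^θ for all y ∈ W with ‖y − φ(x∞)‖ < σ. Then there is δ > 0 such that for all x ∈ U with ‖x − x∞‖ < δ: ‖D(E∘φ)ₓ‖_{X*} ≥ (Z/c) |E(φ(x)) − E(φ(x∞))|^θ. -/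
/-- Chart transfer of the Łojasiewicz–Simon gradient inequality:
if `φ : U → Y` is differentiable with surjective derivatives satisfying a uniform
lower bound `‖v‖ ≤ c ‖Dφₓ v‖`, `φ` is continuous at `x∞`, and `E` satisfies a
Łojasiewicz–Simon inequality near `φ(x∞)`, then `E ∘ φ` satisfies one near `x∞`
with constant `Z/c`. -/
theorem stmt16 {X Y : Type*}
    [NormedAddCommGroup X] [NormedSpace ℝ X] [CompleteSpace X]
    [NormedAddCommGroup Y] [NormedSpace ℝ Y] [CompleteSpace Y]
    (U : Set X) (hU : IsOpen U) (xlim : X) (hx : xlim ∈ U)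
    (φ : X → Y) (Dφ : X → X →L[ℝ] Y)
    (hφd : ∀ x ∈ U, HasFDerivAt φ (Dφ x) x)
    (hφcont : ContinuousAt φ xlim)
    (c : ℝ) (hc : 0 < c)
    (hsurj : ∀ x ∈ U, Function.Surjective (Dφ x))
    (hlow : ∀ x ∈ U, ∀ v : X, ‖v‖ ≤ c * ‖Dφ x v‖)
    (W : Set Y) (hW : IsOpen W) (hφU : φ '' U ⊆ W)
    (E : Y → ℝ) (hE : ∀ y ∈ W, DifferentiableAt ℝ E y)
    (Z σ θ : ℝ) (hZ : 0 < Z) (hσ : 0 < σ) (hθ : θ ∈ Set.Ico (1/2 : ℝ) 1)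
    (hLS : ∀ y ∈ W, ‖y - φ xlim‖ < σ →
      Z * |E y - E (φ xlim)| ^ θ ≤ ‖fderiv ℝ E y‖) :
    ∃ δ > 0, ∀ x ∈ U, ‖x - xlim‖ < δ →
      Z / c * |E (φ x) - E (φ xlim)| ^ θ ≤ ‖fderiv ℝ (E ∘ φ) x‖ := by

  obtain ⟨δ, hδ, hδ'⟩ := Metric.continuousAt_iff.mp hφcont σ hσ
  refine ⟨δ, hδ, fun x hxU hxd => ?_⟩
  have hyW : φ x ∈ W := hφU ⟨x, hxU, rfl⟩
  have hyσ : ‖φ x - φ xlim‖ < σ := by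
    have := hδ' (show dist x xlim < δ by rwa [dist_eq_norm]
    )
    rwa [dist_eq_norm] at this
  have hEy := hE (φ x) hyW
  have hcomp : fderiv ℝ (E ∘ φ) x = (fderiv ℝ E (φ x)).comp (Dφ x) := by
    have := (hEy.hasFDerivAt.comp x (hφd x hxU)).fderiv
    simpa [Function.comp] using this
  have hbound : ‖fderiv ℝ E (φ x)‖ ≤ c * ‖(fderiv ℝ E (φ x)).comp (Dφ x)‖ := by
    apply ContinuousLinearMap.opNorm_le_bound _
      (by positivity)
    intro w
    obtain ⟨v, hv⟩ := hsurj x hxU w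
    calc ‖fderiv ℝ E (φ x) w‖ = ‖((fderiv ℝ E (φ x)).comp (Dφ x)) v‖ := by
          rw [ContinuousLinearMap.comp_apply, hv]
      _ ≤ ‖(fderiv ℝ E (φ x)).comp (Dφ x)‖ * ‖v‖ :=
          ContinuousLinearMap.le_opNorm _ _
      _ ≤ ‖(fderiv ℝ E (φ x)).comp (Dφ x)‖ * (c * ‖Dφ x v‖) := by
          exact mul_le_mul_of_nonneg_left (hlow x hxU v) (norm_nonneg _)
      _ = c * ‖(fderiv ℝ E (φ x)).comp (Dφ x)‖ * ‖w‖ := by rw [hv]; ring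
  have hls := hLS (φ x) hyW hyσ
  rw [hcomp, div_mul_eq_mul_div, div_le_iff₀ hc]
  calc Z * |E (φ x) - E (φ xlim)| ^ θ ≤ ‖fderiv ℝ E (φ x)‖ := hls
    _ ≤ c * ‖(fderiv ℝ E (φ x)).comp (Dφ x)‖ := hbound
    _ = ‖(fderiv ℝ E (φ x)).comp (Dφ x)‖ * c := mul_comm _ _
end
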